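/- arXiv:1810.05381 — 6 statements merged into one kernel-verified Lean document; each statement's English description precedes it below -/
import Mathlib

section
/- Let P ∈ B(H) be a bounded idempotent. Then the kernel of P − P* is the orthogonal direct sum (R(P) ∩ R(P*)) ⊕ (N(P) ∩ N(P*)). (Equivalently, in the block decomposition H = R(P) ⊕ R(P)^⊥ in which P = [[I, P1],[0,0]], one has N(P − P*) = N(P1*) ⊕ N(P1).) -/
open ContinuousLinearMap

variable {H : Type*} [NormedAddCommGroup H] [InnerProductSpace ℂ H] [CompleteSpace H]

namespace LinearMap

variable {R M : Type*} [Semiring R] [AddCommGroup M] [Module R M]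

/-- If `P x = Q x`, then `x = P x + (x - P x)` splits `x` along the two summands: `Q` fixes
`P x = Q x` because `Q` is idempotent, so it kills `x - P x` as `P` does. -/
theorem ker_sub_eq_range_inf_range_sup_ker_inf_ker {P Q : M →ₗ[R] M}
    (hP : IsIdempotentElem P) (hQ : IsIdempotentElem Q) :
    ker (P - Q) = (range P ⊓ range Q) ⊔ (ker P ⊓ ker Q) := by
  apply le_antisymm
  · intro x hx
    have hPQ : P x = Q x := sub_eq_zero.mp hx
    have hP_mem : P x ∈ range P ⊓ range Q := ⟨mem_range_self P x, hPQ ▸ mem_range_self Q x⟩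
    have hQP : Q (P x) = P x := (IsIdempotentElem.mem_range_iff hQ).mp hP_mem.2
    have hsub_mem : x - P x ∈ ker P ⊓ ker Q := by
      refine Submodule.mem_inf.mpr ⟨?_, ?_⟩ <;> rw [mem_ker, map_sub]
      · rw [(IsIdempotentElem.mem_range_iff hP).mp hP_mem.1, sub_self]
      · rw [hQP, hPQ, sub_self]
    simpa using Submodule.add_mem_sup hP_mem hsub_mem
  · refine sup_le (fun y hy => ?_) (fun z hz => ?_) <;> rw [mem_ker, sub_apply]
    · rw [(IsIdempotentElem.mem_range_iff hP).mp hy.1, (IsIdempotentElem.mem_range_iff hQ).mp hy.2,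
        sub_self]
    · rw [mem_ker.mp hz.1, mem_ker.mp hz.2, sub_self]

end LinearMap

/-- For a bounded idempotent `P`, the kernel of `P − P*` is the orthogonal
direct sum `(R(P) ∩ R(P*)) ⊕ (N(P) ∩ N(P*))`. -/
theorem ker_sub_adjoint (P : H →L[ℂ] H) (hP : P * P = P) :
    LinearMap.ker ((P - adjoint P : H →L[ℂ] H) : H →ₗ[ℂ] H) =
      (LinearMap.range (P : H →ₗ[ℂ] H) ⊓ LinearMap.range (adjoint P : H →ₗ[ℂ] H)) ⊔
        (LinearMap.ker (P : H →ₗ[ℂ] H) ⊓ LinearMap.ker (adjoint P : H →ₗ[ℂ] H)) ∧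
    Submodule.IsOrtho (LinearMap.range (P : H →ₗ[ℂ] H) ⊓ LinearMap.range (adjoint P : H →ₗ[ℂ] H))
      (LinearMap.ker (P : H →ₗ[ℂ] H) ⊓ LinearMap.ker (adjoint P : H →ₗ[ℂ] H)) := by
  have hP' : IsIdempotentElem (adjoint P) := star_eq_adjoint P ▸ IsIdempotentElem.star hP
  refine ⟨?_, ?_⟩
  · rw [toLinearMap_sub]
    exact LinearMap.ker_sub_eq_range_inf_range_sup_ker_inf_ker
      (isIdempotentElem_toLinearMap_iff.mpr hP) (isIdempotentElem_toLinearMap_iff.mpr hP')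
  · have hortho : Submodule.IsOrtho (LinearMap.ker (adjoint P : H →ₗ[ℂ] H))
        (LinearMap.range (P : H →ₗ[ℂ] H)) :=
      Submodule.isOrtho_iff_le.mpr (orthogonal_range P).ge
    exact hortho.symm.mono inf_le_left inf_le_right
end

section
/- Let P ∈ B(H) be a bounded idempotent and let S := { J ∈ B(H) : J is a symmetry and JPJ = P* }. Then the following are equivalent: (a) S has a maximum in the Loewner order (i.e., there exists J0 ∈ S with J ≤ J0 for all J ∈ S); (b) P is an orthogonal projection (P = P* = P²); (c) the identity operator I is the maximum of S in the Loewner order. -/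
open ContinuousLinearMap

variable {H : Type*} [NormedAddCommGroup H] [InnerProductSpace ℂ H] [CompleteSpace H]

/-- A symmetry (self-adjoint involution): `J = J* = J⁻¹`. -/
def IsSymmetry (J : H →L[ℂ] H) : Prop := IsSelfAdjoint J ∧ J * J = 1

/-!
If `J₀` is the Loewner maximum of `S`, then `-J₀ ∈ S` gives `-J₀ ≤ J₀`, i.e. `J₀ ≥ 0`; a positive
symmetry is the square root of `J₀² = 1`, hence `J₀ = 1` and `P* = 1 P 1 = P`. Conversely, if
`P* = P` then `1 ∈ S`, and `J ≤ 1` for every symmetry because `1 - J = ½ (1 - J)^* (1 - J)`.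
-/

open scoped ComplexOrder

namespace IsSymmetry

variable {J : H →L[ℂ] H}

theorem neg (hJ : IsSymmetry J) : IsSymmetry (-J) :=
  ⟨hJ.1.neg, by rw [neg_mul_neg, hJ.2]⟩

theorem one_sub_mul_self (hJ : IsSymmetry J) : (1 - J) * (1 - J) = (2 : ℂ) • (1 - J) := by
  rw [mul_sub, sub_mul, sub_mul, one_mul, one_mul, mul_one, hJ.2, two_smul]
  abel

theorem le_one (hJ : IsSymmetry J) : J ≤ 1 := by
  have h : 1 - J = (2⁻¹ : ℂ) • (adjoint (1 - J) ∘L (1 - J)) := by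
    rw [((IsSelfAdjoint.one _).sub hJ.1).adjoint_eq, ← mul_def, hJ.one_sub_mul_self, smul_smul]
    norm_num
  rw [le_def, h]
  exact (isPositive_adjoint_comp_self _).smul_of_nonneg (by positivity)

theorem eq_one_of_nonneg (hJ : IsSymmetry J) (h : 0 ≤ J) : J = 1 := by
  rw [← CFC.sqrt_mul_self J, hJ.2, CFC.sqrt_one]

theorem eq_one_of_neg_le (hJ : IsSymmetry J) (h : -J ≤ J) : J = 1 := by
  refine hJ.eq_one_of_nonneg ?_
  rw [le_def, sub_neg_eq_add, ← two_smul ℂ] at h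
  rw [nonneg_iff_isPositive]
  simpa [smul_smul] using h.smul_of_nonneg (c := (2⁻¹ : ℂ)) (by positivity)

end IsSymmetry

theorem max_symmetry_JPJ_tfae_general (P : H →L[ℂ] H) :
    let S : Set (H →L[ℂ] H) := {J | IsSymmetry J ∧ J * P * J = adjoint P}
    ((∃ J0 ∈ S, ∀ J ∈ S, (J0 - J).IsPositive) ↔ adjoint P = P) ∧
      (adjoint P = P ↔
        (1 : H →L[ℂ] H) ∈ S ∧ ∀ J ∈ S, ((1 : H →L[ℂ] H) - J).IsPositive) := by
  intro S
  have one_mem_iff : (1 : H →L[ℂ] H) ∈ S ↔ adjoint P = P := by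
    simp only [S, Set.mem_ofPred_eq, one_mul, mul_one, eq_comm (a := P), and_iff_right_iff_imp]
    exact fun _ => ⟨.one _, one_mul 1⟩
  have one_sub_isPositive : ∀ J ∈ S, ((1 : H →L[ℂ] H) - J).IsPositive :=
    fun J hJ => hJ.1.le_one
  refine ⟨⟨fun ⟨J0, hJ0, hmax⟩ => ?_, fun h => ⟨1, one_mem_iff.2 h, one_sub_isPositive⟩⟩,
    ⟨fun h => ⟨one_mem_iff.2 h, one_sub_isPositive⟩, fun h => one_mem_iff.1 h.1⟩⟩
  have hneg : -J0 ∈ S := ⟨hJ0.1.neg, by simpa only [neg_mul, mul_neg, neg_neg] using hJ0.2⟩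
  have hJ0_one : J0 = 1 := hJ0.1.eq_one_of_neg_le (hmax (-J0) hneg)
  exact one_mem_iff.1 (hJ0_one ▸ hJ0)

/-- For the set `S` of symmetries `J` with `JPJ = P*`:
`S` has a Loewner maximum iff `P` is an orthogonal projection iff
the identity is the maximum of `S`. -/
theorem max_symmetry_JPJ_tfae (P : H →L[ℂ] H) (hP : P * P = P) :
    let S : Set (H →L[ℂ] H) := {J | IsSymmetry J ∧ J * P * J = adjoint P}
    ((∃ J0 ∈ S, ∀ J ∈ S, (J0 - J).IsPositive) ↔ adjoint P = P) ∧
      (adjoint P = P ↔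
        (1 : H →L[ℂ] H) ∈ S ∧ ∀ J ∈ S, ((1 : H →L[ℂ] H) - J).IsPositive) :=
  max_symmetry_JPJ_tfae_general P
end

section
/- For every bounded idempotent P ∈ B(H) there exists a symmetry J ∈ B(H) such that JPJ = P*. (For instance, with respect to the decomposition H = R(P) ⊕ R(P)^⊥, writing P = [[I, P1],[0,0]] and T = (I + P1 P1*)^{1/2}, the operator J with block matrix [[−T^{-1}, −T^{-1}P1],[−P1*T^{-1}, (I + P1*P1)^{-1/2}]] is such a symmetry.) -/
/-!
Put `d = P + P* - 1`. A direct computation gives `d P = P* d`, `P d = d P*` and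
`d² = 1 + (P - P*)(P - P*)* ≥ 1`, so `d` is an invertible self-adjoint element. Its polar part
`J = d (d²)^(-1/2)` is then a symmetry, and since `d²` commutes with `P`, so does `(d²)^(-1/2)`;
hence `J` intertwines `P` and `P*` just as `d` does, i.e. `J P J = P* J J = P*`.
-/

open ContinuousLinearMap

section StarRing

variable {R : Type*} [Ring R] [StarRing R] {P : R}

theorem add_star_sub_one_mul_of_isIdempotentElem (hP : IsIdempotentElem P) :
    (P + star P - 1) * P = star P * (P + star P - 1) := by
  have hP' : star P * star P = star P := hP.star
  simp only [sub_mul, add_mul, mul_sub, mul_add, hP.eq, hP', one_mul, mul_one]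
  abel

theorem mul_add_star_sub_one_of_isIdempotentElem (hP : IsIdempotentElem P) :
    P * (P + star P - 1) = (P + star P - 1) * star P := by
  have hP' : star P * star P = star P := hP.star
  simp only [sub_mul, add_mul, mul_sub, mul_add, hP.eq, hP', one_mul, mul_one]
  abel

theorem add_star_sub_one_mul_self_of_isIdempotentElem (hP : IsIdempotentElem P) :
    (P + star P - 1) * (P + star P - 1) = 1 + (P - star P) * star (P - star P) := by
  have hP' : star P * star P = star P := hP.star
  simp only [star_sub, star_star, sub_mul, add_mul, mul_sub, mul_add, hP.eq, hP', one_mul,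
    mul_one]
  abel

theorem one_le_add_star_sub_one_mul_self_of_isIdempotentElem [PartialOrder R]
    [StarOrderedRing R] (hP : IsIdempotentElem P) :
    1 ≤ (P + star P - 1) * (P + star P - 1) := by
  rw [add_star_sub_one_mul_self_of_isIdempotentElem hP]
  exact le_add_of_nonneg_right (mul_star_self_nonneg _)

end StarRing

section CStarAlgebra

variable {A : Type*} [CStarAlgebra A] [PartialOrder A] [StarOrderedRing A]

theorem IsSelfAdjoint.exists_symmetry_intertwining {d x y : A} (hd : IsSelfAdjoint d)
    (hd_unit : IsUnit d) (hdx : d * x = y * d) (hdy : d * y = x * d) :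
    ∃ J : A, IsSelfAdjoint J ∧ J * J = 1 ∧ J * x = y * J := by
  have hdd : IsStrictlyPositive (d * d) :=
    (isUnit_mul_self_iff.mpr hd_unit).isStrictlyPositive
      (by simpa only [hd.star_eq] using star_mul_self_nonneg d)
  set s := (d * d) ^ (-(1 / 2) : ℝ) with hs
  have hs_sa : IsSelfAdjoint s := CFC.rpow_nonneg.isSelfAdjoint
  have hsd : Commute s d := ((Commute.refl d).mul_left (Commute.refl d)).cfc_nnreal _
  have hsx : Commute s x := by
    refine Commute.cfc_nnreal ?_ _
    show d * d * x = x * (d * d)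
    rw [mul_assoc, hdx, ← mul_assoc, hdy, mul_assoc]
  have hdds : d * d * (s * s) = 1 :=
    calc d * d * (s * s) = (d * d) ^ (1 : ℝ) * (d * d) ^ (-1 : ℝ) := by
          rw [CFC.rpow_one (d * d) hdd.nonneg, hs, ← CFC.rpow_add hdd.isUnit]
          norm_num
      _ = 1 := CFC.rpow_mul_rpow_neg 1 hdd
  refine ⟨d * s, ?_, ?_, ?_⟩
  · rw [IsSelfAdjoint, star_mul, hs_sa.star_eq, hd.star_eq, hsd.eq]
  · simpa only [mul_assoc, hsd.left_comm] using hdds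
  · rw [mul_assoc, hsx.eq, ← mul_assoc, hdx, mul_assoc]

theorem exists_symmetry_mul_mul_eq_star_of_isIdempotentElem {P : A} (hP : IsIdempotentElem P) :
    ∃ J : A, IsSelfAdjoint J ∧ J * J = 1 ∧ J * P * J = star P := by
  have hd : IsSelfAdjoint (P + star P - 1) := (IsSelfAdjoint.add_star_self P).sub (.one A)
  have hd_unit : IsUnit (P + star P - 1) := isUnit_mul_self_iff.mp
    (isStrictlyPositive_one.of_le (one_le_add_star_sub_one_mul_self_of_isIdempotentElem hP)).isUnit
  obtain ⟨J, hJ, hJJ, hJP⟩ := hd.exists_symmetry_intertwining hd_unit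
    (add_star_sub_one_mul_of_isIdempotentElem hP)
    (mul_add_star_sub_one_of_isIdempotentElem hP).symm
  exact ⟨J, hJ, hJJ, by rw [hJP, mul_assoc, hJJ, mul_one]⟩

end CStarAlgebra

variable {H : Type*} [NormedAddCommGroup H] [InnerProductSpace ℂ H] [CompleteSpace H]

/-- For every bounded idempotent `P` there is a symmetry `J` with `JPJ = P*`. -/
theorem exists_symmetry_JPJ (P : H →L[ℂ] H) (hP : P * P = P) :
    ∃ J : H →L[ℂ] H, IsSymmetry J ∧ J * P * J = adjoint P := by
  obtain ⟨J, hJ, hJJ, hJPJ⟩ := exists_symmetry_mul_mul_eq_star_of_isIdempotentElem hP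
  exact ⟨J, ⟨hJ, hJJ⟩, by rw [hJPJ, star_eq_adjoint]⟩
end

section
/- Let K be a complex Hilbert space and A ∈ B(K, H) a bounded operator. Then the operator J0 := I − 2·P_A (equivalently, 2·P_{N(A*)} − I) is a symmetry satisfying J0 A = −A, and every symmetry J ∈ B(H) with JA = −A satisfies J ≤ J0 in the Loewner order; that is, J0 is the maximum of the set of symmetries J with JA = −A. -/
open ContinuousLinearMap

variable {H K : Type*} [NormedAddCommGroup H] [InnerProductSpace ℂ H] [CompleteSpace H]
  [NormedAddCommGroup K] [InnerProductSpace ℂ K] [CompleteSpace K]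

/-- The orthogonal projection onto a closed subspace `M`, as an operator on `H`. -/
noncomputable def oproj (M : Submodule ℂ H) (hM : IsClosed (M : Set H)) : H →L[ℂ] H :=
  haveI : CompleteSpace M := hM.completeSpace_coe
  M.subtypeL ∘L M.orthogonalProjectionOnto

/-- The orthogonal projection onto the closure of the range of an operator. -/
noncomputable def rangeProj (A : K →L[ℂ] H) : H →L[ℂ] H :=
  oproj (LinearMap.range (A : K →ₗ[ℂ] H)).topologicalClosure (Submodule.isClosed_topologicalClosure _)

/-- The orthogonal projection onto the kernel of an operator. -/
noncomputable def kerProj (A : H →L[ℂ] K) : H →L[ℂ] H :=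
  oproj (LinearMap.ker (A : H →ₗ[ℂ] K)) (ContinuousLinearMap.isClosed_ker A)

/-!
Let `P` be the projection onto the closure of the range of `A`. A symmetry `J` with `J A = -A`
is `-1` on that closure, so `J P = P J = -P`. With `Q = 1 - P` this gives
`J0 - J = Q (1 - J) Q`, and `1 - J` is positive because `(1 - J) / 2` is a projection.
-/

theorem IsIdempotentElem.one_sub_two_nsmul_mul_self {R : Type*} [Ring R] {p : R}
    (hp : IsIdempotentElem p) : (1 - 2 • p) * (1 - 2 • p) = 1 := by
  simp only [two_nsmul, sub_mul, mul_sub, add_mul, mul_add, one_mul, mul_one, hp.eq]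
  abel

section StarOrderedRing

variable {R : Type*} [Ring R] [StarRing R] [PartialOrder R] [StarOrderedRing R]

theorem IsSelfAdjoint.le_one_of_mul_self_eq_one [Algebra ℝ R] [StarModule ℝ R] {J : R}
    (hJ : IsSelfAdjoint J) (hJJ : J * J = 1) : J ≤ 1 := by
  set e : R := (2⁻¹ : ℝ) • (1 - J)
  have he : IsStarProjection e := by
    have hsq : (1 - J) * (1 - J) = (2 : ℝ) • (1 - J) := by
      rw [two_smul]
      simp only [sub_mul, mul_sub, one_mul, mul_one, hJJ]
      abel
    refine ⟨?_, (IsSelfAdjoint.all _).smul ((IsSelfAdjoint.one R).sub hJ)⟩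
    rw [IsIdempotentElem, smul_mul_smul_comm, hsq, smul_smul]
    norm_num [e]
  have h : 1 - J = e + e := by
    rw [← two_smul ℝ e, smul_smul]; norm_num
  exact sub_nonneg.1 (h ▸ add_nonneg he.nonneg he.nonneg)

theorem IsSelfAdjoint.le_one_sub_two_nsmul_of_mul_eq_neg [Algebra ℝ R] [StarModule ℝ R]
    {J P : R} (hJ : IsSelfAdjoint J) (hJJ : J * J = 1) (hP : IsStarProjection P)
    (hJP : J * P = -P) : J ≤ 1 - 2 • P := by
  have hPJ : P * J = -P := by
    simpa only [star_mul, star_neg, hJ.star_eq, hP.isSelfAdjoint.star_eq] using congrArg star hJP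
  have h : star (1 - P) * (1 - J) * (1 - P) = 1 - 2 • P - J := by
    rw [hP.one_sub.isSelfAdjoint.star_eq]
    simp only [two_nsmul, sub_mul, mul_sub, one_mul, mul_one, neg_mul, hJP, hPJ,
      hP.isIdempotentElem.eq]
    abel
  have h1J : 0 ≤ 1 - J := sub_nonneg.2 (hJ.le_one_of_mul_self_eq_one hJJ)
  exact sub_nonneg.1 (h ▸ star_left_conjugate_nonneg h1J _)

end StarOrderedRing

omit [CompleteSpace K] in
lemma rangeProj_eq_starProjection (A : K →L[ℂ] H) :
    rangeProj A = (LinearMap.range (A : K →ₗ[ℂ] H)).topologicalClosure.starProjection :=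
  rfl

omit [CompleteSpace K] in
lemma kerProj_eq_starProjection (A : H →L[ℂ] K) :
    kerProj A = (LinearMap.ker (A : H →ₗ[ℂ] K)).starProjection :=
  rfl

omit [CompleteSpace K] in
lemma isStarProjection_rangeProj (A : K →L[ℂ] H) : IsStarProjection (rangeProj A) :=
  isStarProjection_starProjection

lemma kerProj_adjoint (A : K →L[ℂ] H) : kerProj (adjoint A) = 1 - rangeProj A := by
  have h : LinearMap.ker (adjoint A : H →ₗ[ℂ] K) =
      (LinearMap.range (A : K →ₗ[ℂ] H)).topologicalClosureᗮ := by
    rw [← orthogonal_range, Submodule.orthogonal_closure]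
  simp only [kerProj_eq_starProjection, rangeProj_eq_starProjection, h,
    Submodule.starProjection_orthogonal']

omit [CompleteSpace K] in
lemma rangeProj_comp_self (A : K →L[ℂ] H) : rangeProj A ∘L A = A := by
  ext x
  exact Submodule.starProjection_eq_self_iff.2
    (Submodule.le_topologicalClosure _ (LinearMap.mem_range_self _ x))

omit [CompleteSpace H] [CompleteSpace K] in
lemma apply_eq_neg_of_mem_closure_range {A : K →L[ℂ] H} {J : H →L[ℂ] H}
    (hJA : J ∘L A = -A) {x : H}
    (hx : x ∈ (LinearMap.range (A : K →ₗ[ℂ] H)).topologicalClosure) : J x = -x := by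
  have hle : (LinearMap.range (A : K →ₗ[ℂ] H)).topologicalClosure ≤
      LinearMap.ker ((J + 1 : H →L[ℂ] H) : H →ₗ[ℂ] H) := by
    refine Submodule.topologicalClosure_minimal _ ?_ (isClosed_ker (J + 1))
    rintro _ ⟨y, rfl⟩
    simpa [add_eq_zero_iff_eq_neg] using DFunLike.congr_fun hJA y
  simpa [add_eq_zero_iff_eq_neg] using hle hx

omit [CompleteSpace K] in
lemma mul_rangeProj_eq_neg {A : K →L[ℂ] H} {J : H →L[ℂ] H} (hJA : J ∘L A = -A) :
    J * rangeProj A = -rangeProj A := by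
  ext x
  exact apply_eq_neg_of_mem_closure_range hJA (Submodule.starProjection_apply_mem _ x)

/-- `J0 = I − 2 P_A = 2 P_{N(A*)} − I` is the Loewner maximum of the set of
symmetries `J` with `JA = −A`. -/
theorem max_symmetry_neg (A : K →L[ℂ] H) :
    let J0 : H →L[ℂ] H := 1 - 2 • rangeProj A
    IsSymmetry J0 ∧ J0 = 2 • kerProj (adjoint A) - 1 ∧ J0 ∘L A = -A ∧
      ∀ J : H →L[ℂ] H, IsSymmetry J → J ∘L A = -A → (J0 - J).IsPositive := by
  intro J0
  have hP := isStarProjection_rangeProj A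
  refine ⟨⟨?_, hP.isIdempotentElem.one_sub_two_nsmul_mul_self⟩, ?_, ?_, ?_⟩
  · exact (IsSelfAdjoint.one _).sub ((IsSelfAdjoint.all 2).smul hP.isSelfAdjoint)
  · rw [kerProj_adjoint]
    module
  · rw [sub_comp, smul_comp, rangeProj_comp_self, one_def, id_comp]
    module
  · intro J ⟨hJ, hJJ⟩ hJA
    exact (le_def J J0).1 (hJ.le_one_sub_two_nsmul_of_mul_eq_neg hJJ hP (mul_rangeProj_eq_neg hJA))
end

section
/- Let P ∈ B(H) be a bounded idempotent. Then the range of P + P* is closed if and only if the range of 2I − P − P* is closed. -/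
/-!
Write `a = P + P*`, `b = 2 - a` and `d = P - P*`. Since `P` and `P*` are idempotent,
`a d + d a = 2 d` and `d² = a b`, i.e. `d` intertwines `a` and `b`. A self-adjoint operator
with closed range has a commuting inner inverse `r` (`a r a = a`), namely the inverse of
`a + E` with `E` the orthogonal projection onto `ker a`. The C*-identity forces `d` to vanish
on `ker a`, and then `r d r² d + (1 - a r) / 2` is an inner inverse of `b`, so `b` has closed
range. Replacing `P` by `1 - P` exchanges `a` and `b`.
-/

open ContinuousLinearMap

variable {H : Type*} [NormedAddCommGroup H] [InnerProductSpace ℂ H] [CompleteSpace H]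

theorem IsIdempotentElem.add_mul_sub_add_sub_mul_add {R : Type*} [Ring R] {p q : R}
    (hp : IsIdempotentElem p) (hq : IsIdempotentElem q) :
    (p + q) * (p - q) + (p - q) * (p + q) = 2 * (p - q) := by
  have h : (p + q) * (p - q) + (p - q) * (p + q) = 2 * (p * p - q * q) := by noncomm_ring
  rw [h, hp.eq, hq.eq]

theorem IsIdempotentElem.sub_mul_sub {R : Type*} [Ring R] {p q : R}
    (hp : IsIdempotentElem p) (hq : IsIdempotentElem q) :
    (p - q) * (p - q) = (p + q) * (2 - (p + q)) := by
  have h : (p + q) * (2 - (p + q)) - (p - q) * (p - q) = 2 * (p + q) - 2 * (p * p + q * q) := by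
    noncomm_ring
  refine (sub_eq_zero.mp ?_).symm
  rw [h, hp.eq, hq.eq, sub_self]

theorem two_sub_mul_mul_two_sub {R 𝕜 : Type*} [Ring R] [Field 𝕜] [NeZero (2 : 𝕜)]
    [Algebra 𝕜 R] {a d r : R} (had : a * d + d * a = 2 * d) (hdd : d * d = a * (2 - a))
    (har : Commute a r) (hara : a * r * a = a) (hd : d * (1 - a * r) = 0) :
    (2 - a) * (r * d * r ^ 2 * d + (2⁻¹ : 𝕜) • (1 - a * r)) * (2 - a) = 2 - a := by
  have hbd : (2 - a) * d = d * a := by linear_combination (norm := noncomm_ring) -had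
  have hdb : d * (2 - a) = a * d := by linear_combination (norm := noncomm_ring) -had
  have hbr : Commute (2 - a) r := (Commute.ofNat_left 2 r).sub_left har
  have hfa : (1 - a * r) * a = 0 := by linear_combination (norm := noncomm_ring) -hara
  have haf : a * (1 - a * r) = 0 := by
    linear_combination (norm := noncomm_ring) -hara - a * har.eq
  have hmain : (2 - a) * (r * d * r ^ 2 * d) * (2 - a) = a * r * (2 - a) :=
    calc (2 - a) * (r * d * r ^ 2 * d) * (2 - a)
        = r * ((2 - a) * d) * r ^ 2 * (d * (2 - a)) := by
          linear_combination (norm := noncomm_ring) hbr.eq * d * r ^ 2 * d * (2 - a)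
      _ = r * d * (a * r * (a * r)) * d := by
          linear_combination (norm := noncomm_ring) r * hbd * r ^ 2 * (d * (2 - a)) +
            r * d * a * r ^ 2 * hdb - r * d * a * r * har.eq * d
      _ = r * d * d := by
          linear_combination (norm := noncomm_ring) r * d * hara * r * d - r * hd * d
      _ = a * r * (2 - a) := by
          linear_combination (norm := noncomm_ring) r * hdd - har.eq * (2 - a)
  have hcorr : (2 - a) * (1 - a * r) * (2 - a) = 4 * (1 - a * r) := by
    linear_combination (norm := (noncomm_ring; norm_num)) -2 * haf - (2 - a) * hfa
  have hhalf : (2⁻¹ : 𝕜) • (4 * (1 - a * r)) = 2 * (1 - a * r) := by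
    rw [show (4 : R) = 2 * 2 by norm_num, mul_assoc, two_mul (2 * _), ← two_smul 𝕜, smul_smul,
      inv_mul_cancel₀ two_ne_zero, one_smul]
  rw [mul_add, add_mul, hmain, mul_smul_comm, smul_mul_assoc, hcorr, hhalf]
  linear_combination (norm := (noncomm_ring; norm_num)) -hara

theorem CStarRing.mul_eq_zero_of_star_mul_self_mul_eq_zero {A : Type*} [NonUnitalNormedRing A]
    [StarRing A] [CStarRing A] {x f : A} (h : star x * x * f = 0) : x * f = 0 := by
  rw [← CStarRing.star_mul_self_eq_zero_iff, star_mul,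
    show star f * star x * (x * f) = star f * (star x * x * f) by noncomm_ring, h, mul_zero]

theorem exists_two_sub_sub_star_mul_mul_eq_self {A 𝕜 : Type*} [NormedRing A]
    [StarRing A] [CStarRing A] [Field 𝕜] [NeZero (2 : 𝕜)] [Algebra 𝕜 A] {p r : A}
    (hp : IsIdempotentElem p) (hr : Commute (p + star p) r)
    (hrr : (p + star p) * r * (p + star p) = p + star p) :
    ∃ g, (2 - p - star p) * g * (2 - p - star p) = 2 - p - star p := by
  have hq : IsIdempotentElem (star p) := hp.star
  have hdd := hp.sub_mul_sub hq
  have haf : (p + star p) * (1 - (p + star p) * r) = 0 := by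
    linear_combination (norm := noncomm_ring) -hrr - (p + star p) * hr.eq
  have hd : (p - star p) * (1 - (p + star p) * r) = 0 := by
    refine CStarRing.mul_eq_zero_of_star_mul_self_mul_eq_zero ?_
    rw [star_sub, star_star]
    linear_combination (norm := noncomm_ring)
      -hdd * (1 - (p + star p) * r) - (2 - (p + star p)) * haf
  simp only [sub_sub]
  exact ⟨_,
    two_sub_mul_mul_two_sub (𝕜 := 𝕜) (hp.add_mul_sub_add_sub_mul_add hq) hdd hr hrr hd⟩

theorem IsSelfAdjoint.exists_commute_mul_mul_eq_self {𝕜 E : Type*} [RCLike 𝕜]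
    [NormedAddCommGroup E] [InnerProductSpace 𝕜 E] [CompleteSpace E] {A : E →L[𝕜] E}
    (hA : IsSelfAdjoint A) (hclosed : IsClosed (LinearMap.range (A : E →ₗ[𝕜] E) : Set E)) :
    ∃ R, Commute A R ∧ A * R * A = A := by
  set K := LinearMap.ker (A : E →ₗ[𝕜] E)
  have : CompleteSpace K := A.isClosed_ker.completeSpace_coe
  set F := K.starProjection
  have hAF (x : E) : A (F x) = 0 := K.starProjection_apply_mem x
  have hFA (x : E) : F (A x) = 0 := by
    refine K.starProjection_apply_eq_zero_iff.mpr fun z hz => ?_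
    rw [← hA.adjoint_eq, adjoint_inner_right, show A z = 0 from hz, inner_zero_left]
  have hFF (x : E) : F (F x) = F x := congr($K.isIdempotentElem_starProjection.eq x)
  have hunit : IsUnit (A + F) := by
    rw [ContinuousLinearMap.isUnit_iff_bijective]
    refine ⟨(injective_iff_map_eq_zero (A + F)).mpr fun x hx => ?_, fun y => ?_⟩
    · have hFx : F x = 0 := by simpa [hFA, hFF] using congr(F $hx)
      have hAx : A x = 0 := by simpa [hFx] using hx
      rw [← hFx, K.starProjection_eq_self_iff.mpr hAx]
    · have hmem : y - F y ∈ LinearMap.range (A : E →ₗ[𝕜] E) := by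
        have := K.sub_starProjection_mem_orthogonal y
        rwa [orthogonal_ker, hA.adjoint_eq, hclosed.submodule_topologicalClosure_eq] at this
      obtain ⟨z, hz⟩ := hmem
      refine ⟨z - F z + F y, ?_⟩
      simp only [add_apply, map_add, map_sub, hAF, hFF, coe_coe] at hz ⊢
      rw [hz]
      abel
  obtain ⟨u, hu⟩ := hunit
  have hcomm : Commute A u := by
    rw [hu]
    exact (Commute.refl A).add_right (ext fun x => (hAF x).trans (hFA x).symm)
  refine ⟨↑u⁻¹, hcomm.units_inv_right, ?_⟩
  calc A * ↑u⁻¹ * A = A * ↑u * ↑u⁻¹ := by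
        rw [mul_assoc, ← hcomm.units_inv_right.eq, hu, mul_add, show A * F = 0 from ext hAF,
          add_zero, mul_assoc]
    _ = A := by rw [mul_assoc, Units.mul_inv, mul_one]

theorem ContinuousLinearMap.isClosed_range_of_comp_comp_eq_self {R M N : Type*} [Semiring R]
    [TopologicalSpace M] [AddCommMonoid M] [Module R M] [TopologicalSpace N] [AddCommMonoid N]
    [Module R N] [T2Space N] {T : M →L[R] N} {G : N →L[R] M} (h : T ∘L G ∘L T = T) :
    IsClosed (LinearMap.range (T : M →ₗ[R] N) : Set N) := by
  have : (LinearMap.range (T : M →ₗ[R] N) : Set N) = {y | T (G y) = y} := by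
    ext y
    refine ⟨?_, fun hy => ⟨G y, hy⟩⟩
    rintro ⟨x, rfl⟩
    exact congr($h x)
  rw [this]
  exact isClosed_eq (by fun_prop) continuous_id

theorem IsIdempotentElem.isClosed_range_two_sub_sub_adjoint {𝕜 E : Type*} [RCLike 𝕜]
    [NormedAddCommGroup E] [InnerProductSpace 𝕜 E] [CompleteSpace E] {P : E →L[𝕜] E}
    (hP : IsIdempotentElem P)
    (h : IsClosed (LinearMap.range ((P + adjoint P : E →L[𝕜] E) : E →ₗ[𝕜] E) : Set E)) :
    IsClosed (LinearMap.range ((2 - P - adjoint P : E →L[𝕜] E) : E →ₗ[𝕜] E) : Set E) := by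
  rw [← star_eq_adjoint] at h ⊢
  obtain ⟨R, hcomm, hinv⟩ :=
    (IsSelfAdjoint.add_star_self P).exists_commute_mul_mul_eq_self h
  obtain ⟨G, hG⟩ := exists_two_sub_sub_star_mul_mul_eq_self (𝕜 := 𝕜) hP hcomm hinv
  exact isClosed_range_of_comp_comp_eq_self hG

/-- `R(P + P*)` is closed iff `R(2I − P − P*)` is closed. -/
theorem range_add_closed_iff (P : H →L[ℂ] H) (hP : P * P = P) :
    IsClosed ((LinearMap.range ((P + adjoint P : H →L[ℂ] H) : H →ₗ[ℂ] H) : Submodule ℂ H) : Set H) ↔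
      IsClosed ((LinearMap.range ((2 - P - adjoint P : H →L[ℂ] H) : H →ₗ[ℂ] H) : Submodule ℂ H) : Set H) := by
  have hP' : IsIdempotentElem P := hP
  have hadj : adjoint (1 - P) = 1 - adjoint P := by rw [map_sub, adjoint_one]
  have hswap₁ : 1 - P + adjoint (1 - P) = 2 - P - adjoint P := by
    rw [hadj, ← one_add_one_eq_two]; abel
  have hswap₂ : 2 - (1 - P) - adjoint (1 - P) = P + adjoint P := by
    rw [hadj, ← one_add_one_eq_two]; abel
  refine ⟨hP'.isClosed_range_two_sub_sub_adjoint, fun h => ?_⟩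
  have := hP'.one_sub.isClosed_range_two_sub_sub_adjoint (by rwa [hswap₁])
  rwa [hswap₂] at this
end

section
/- Let J ∈ B(H) be a symmetry and P ∈ B(H) a bounded idempotent with JPJ = P* (a J-projection). Then there exist a unique J-contractive projection E1 (i.e., a bounded idempotent E1 with E1* J E1 ≤ J) and a unique J-expansive projection E2 (i.e., a bounded idempotent E2 with E2* J E2 ≥ J) such that P = E1E2 = E2E1 = E1 + E2 − I and E1E2* = E2*E1 = E1 + E2* − I. -/
/-!
Put `S := J (1 - P)`. It is self-adjoint with `S J S = S`, hence
`S⁴ - S² = (J S - S²)* (J S - S²) ≥ 0` and the spectrum of `S` avoids `(-1, 0) ∪ (0, 1)`.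
On such a spectrum `t⁺ = min 1 t⁺ * t` with `min 1 t⁺` idempotent, so `S⁺ = X S` for a spectral
idempotent `X` and `S⁺ J S⁺ = X S J S X = S⁺`; likewise `S⁻ J S⁻ = -S⁻` and `S⁺ J S⁻ = 0`.
These identities make `E₁ = 1 - J S⁺` and `E₂ = 1 + J S⁻` a factorization, with
`J - E₁* J E₁ = S⁺` and `E₂* J E₂ - J = S⁻`.
Conversely a `J`-contractive or `J`-expansive idempotent `E` satisfies `J E = E* J E`, so any
factorization writes `S = J (1 - E₁) - J (E₂ - 1)` as a difference of positive elements with zero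
product, which by uniqueness of the Jordan decomposition are `S⁺` and `S⁻`.
-/

open ContinuousLinearMap

variable {H : Type*} [NormedAddCommGroup H] [InnerProductSpace ℂ H] [CompleteSpace H]

section Ring

variable {A : Type*} [Ring A] {J a : A}

lemma isIdempotentElem_one_sub_mul (ha : a * J * a = a) : IsIdempotentElem (1 - J * a) := by
  have : (1 - J * a) * (1 - J * a) = 1 - J * a - J * a + J * (a * J * a) := by noncomm_ring
  rw [IsIdempotentElem, this, ha]
  abel

variable [StarRing A] {E : A}

lemma sub_star_mul_mul_one_sub_mul (hJ : IsSelfAdjoint J) (hJ2 : J * J = 1)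
    (ha : IsSelfAdjoint a) (haJa : a * J * a = a) :
    J - star (1 - J * a) * J * (1 - J * a) = a := by
  rw [star_sub, star_one, star_mul, hJ.star_eq, ha.star_eq]
  have : J - (1 - a * J) * J * (1 - J * a)
      = (J * J) * a + a * (J * J) - a * (J * J) * (J * a) := by noncomm_ring
  rw [this, hJ2, one_mul, mul_one, ← mul_assoc, haJa]
  abel

lemma star_mul_eq_mul_of_mul_eq_star_mul_mul (hJ : IsSelfAdjoint J)
    (h : J * E = star E * J * E) : star E * J = J * E :=
  calc star E * J = star (J * E) := by rw [star_mul, hJ.star_eq]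
    _ = star (star E * J * E) := by rw [h]
    _ = star E * J * E := by rw [star_mul, star_mul, star_star, hJ.star_eq, mul_assoc]
    _ = J * E := h.symm

end Ring

section Real

variable {t : ℝ}

lemma eq_zero_or_le_neg_one_or_one_le (ht : t = 0 ∨ 1 ≤ |t|) : t = 0 ∨ t ≤ -1 ∨ 1 ≤ t := by
  rcases ht with h | h
  · exact Or.inl h
  · rcases le_abs'.mp h with h | h <;> simp [h]

lemma posPart_eq_min_one_posPart_mul (ht : t = 0 ∨ 1 ≤ |t|) : t⁺ = min 1 t⁺ * t := by
  rcases eq_zero_or_le_neg_one_or_one_le ht with rfl | h | h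
  · simp
  · simp [posPart_eq_zero.mpr (by linarith : t ≤ 0)]
  · simp [posPart_eq_self.mpr (by linarith : 0 ≤ t), min_eq_left h]

lemma negPart_eq_neg_min_one_negPart_mul (ht : t = 0 ∨ 1 ≤ |t|) : t⁻ = -min 1 t⁻ * t := by
  rcases eq_zero_or_le_neg_one_or_one_le ht with rfl | h | h
  · simp
  · simp [negPart_eq_neg.mpr (by linarith : t ≤ 0), min_eq_left (by linarith : 1 ≤ -t)]
  · simp [negPart_eq_zero.mpr (by linarith : 0 ≤ t)]

lemma posPart_eq_min_one_posPart_mul_mul (ht : t = 0 ∨ 1 ≤ |t|) :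
    t⁺ = min 1 t⁺ * t * min 1 t⁺ := by
  rcases eq_zero_or_le_neg_one_or_one_le ht with rfl | h | h
  · simp
  · simp [posPart_eq_zero.mpr (by linarith : t ≤ 0)]
  · simp [posPart_eq_self.mpr (by linarith : 0 ≤ t), min_eq_left h]

lemma neg_negPart_eq_neg_min_one_negPart_mul_mul (ht : t = 0 ∨ 1 ≤ |t|) :
    -t⁻ = -min 1 t⁻ * t * -min 1 t⁻ := by
  rcases eq_zero_or_le_neg_one_or_one_le ht with rfl | h | h
  · simp
  · simp [negPart_eq_neg.mpr (by linarith : t ≤ 0), min_eq_left (by linarith : 1 ≤ -t)]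
  · simp [negPart_eq_zero.mpr (by linarith : 0 ≤ t)]

lemma min_one_posPart_mul_min_one_negPart (t : ℝ) : min 1 t⁺ * min 1 t⁻ = 0 := by
  rcases le_total t 0 with h | h
  · simp [posPart_eq_zero.mpr h]
  · simp [negPart_eq_zero.mpr h]

end Real

section CStarAlgebra

variable {A : Type*} [CStarAlgebra A] {J S : A}

lemma cfc_mul_mul_cfc_of_mul_mul_eq_self (hS : IsSelfAdjoint S) (hSJS : S * J * S = S)
    {f₁ f₂ f g h : ℝ → ℝ} (hg : Continuous g) (hh : Continuous h)
    (h₁ : Set.EqOn f₁ (fun t => g t * t) (spectrum ℝ S))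
    (h₂ : Set.EqOn f₂ (fun t => h t * t) (spectrum ℝ S))
    (h₃ : Set.EqOn f (fun t => g t * t * h t) (spectrum ℝ S)) :
    cfc f₁ S * J * cfc f₂ S = cfc f S := by
  have h₂' : Set.EqOn f₂ (fun t => t * h t) (spectrum ℝ S) := fun t ht =>
    (h₂ ht).trans (mul_comm _ _)
  rw [cfc_congr h₁, cfc_congr h₂', cfc_congr h₃, cfc_mul g (fun t => t) S,
    cfc_mul (fun t => t) h S, cfc_mul (fun t => g t * t) h S, cfc_mul g (fun t => t) S,
    cfc_id' ℝ S]
  calc cfc g S * S * J * (S * cfc h S) = cfc g S * (S * J * S) * cfc h S := by noncomm_ring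
    _ = cfc g S * S * cfc h S := by rw [hSJS]

lemma CFC.posPart_eq_cfc (S : A) : S⁺ = cfc (·⁺ : ℝ → ℝ) S := by
  rw [CFC.posPart_def, cfcₙ_eq_cfc]

lemma CFC.negPart_eq_cfc (S : A) : S⁻ = cfc (·⁻ : ℝ → ℝ) S := by
  rw [CFC.negPart_def, cfcₙ_eq_cfc]

lemma posPart_mul_mul_posPart (hS : IsSelfAdjoint S) (hSJS : S * J * S = S)
    (hgap : ∀ t ∈ spectrum ℝ S, t = 0 ∨ 1 ≤ |t|) : S⁺ * J * S⁺ = S⁺ := by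
  rw [CFC.posPart_eq_cfc]
  exact cfc_mul_mul_cfc_of_mul_mul_eq_self hS hSJS (by fun_prop) (by fun_prop)
    (fun t ht => posPart_eq_min_one_posPart_mul (hgap t ht))
    (fun t ht => posPart_eq_min_one_posPart_mul (hgap t ht))
    (fun t ht => posPart_eq_min_one_posPart_mul_mul (hgap t ht))

lemma negPart_mul_mul_negPart (hS : IsSelfAdjoint S) (hSJS : S * J * S = S)
    (hgap : ∀ t ∈ spectrum ℝ S, t = 0 ∨ 1 ≤ |t|) : S⁻ * J * S⁻ = -S⁻ := by
  rw [CFC.negPart_eq_cfc, ← cfc_neg]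
  exact cfc_mul_mul_cfc_of_mul_mul_eq_self hS hSJS (by fun_prop) (by fun_prop)
    (fun t ht => negPart_eq_neg_min_one_negPart_mul (hgap t ht))
    (fun t ht => negPart_eq_neg_min_one_negPart_mul (hgap t ht))
    (fun t ht => neg_negPart_eq_neg_min_one_negPart_mul_mul (hgap t ht))

lemma posPart_mul_mul_negPart (hS : IsSelfAdjoint S) (hSJS : S * J * S = S)
    (hgap : ∀ t ∈ spectrum ℝ S, t = 0 ∨ 1 ≤ |t|) : S⁺ * J * S⁻ = 0 := by
  rw [CFC.posPart_eq_cfc, CFC.negPart_eq_cfc, ← cfc_const_zero ℝ S]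
  exact cfc_mul_mul_cfc_of_mul_mul_eq_self hS hSJS (by fun_prop) (by fun_prop)
    (fun t ht => posPart_eq_min_one_posPart_mul (hgap t ht))
    (fun t ht => negPart_eq_neg_min_one_negPart_mul (hgap t ht))
    (fun t _ => by linear_combination t * min_one_posPart_mul_min_one_negPart t)

lemma negPart_mul_mul_posPart (hS : IsSelfAdjoint S) (hSJS : S * J * S = S)
    (hgap : ∀ t ∈ spectrum ℝ S, t = 0 ∨ 1 ≤ |t|) : S⁻ * J * S⁺ = 0 := by
  rw [CFC.posPart_eq_cfc, CFC.negPart_eq_cfc, ← cfc_const_zero ℝ S]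
  exact cfc_mul_mul_cfc_of_mul_mul_eq_self hS hSJS (by fun_prop) (by fun_prop)
    (fun t ht => negPart_eq_neg_min_one_negPart_mul (hgap t ht))
    (fun t ht => posPart_eq_min_one_posPart_mul (hgap t ht))
    (fun t _ => by linear_combination t * min_one_posPart_mul_min_one_negPart t)

variable [PartialOrder A] [StarOrderedRing A]

lemma mul_eq_zero_of_star_mul_mul_eq_zero {a e : A} (ha : 0 ≤ a) (h : star e * a * e = 0) :
    a * e = 0 := by
  obtain ⟨b, rfl⟩ := CStarAlgebra.nonneg_iff_eq_star_mul_self.mp ha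
  have hbe : b * e = 0 := by
    rw [← CStarRing.star_mul_self_eq_zero_iff, star_mul]
    simpa only [mul_assoc] using h
  rw [mul_assoc, hbe, mul_zero]

lemma mul_eq_star_mul_mul_of_star_mul_mul_le {E : A} (hE : IsIdempotentElem E)
    (h : star E * J * E ≤ J) : J * E = star E * J * E := by
  have h0 : star E * (J - star E * J * E) * E = 0 := by
    have : star E * (J - star E * J * E) * E
        = star E * J * E - (star E * star E) * J * (E * E) := by noncomm_ring
    rw [this, hE.star.eq, hE.eq, sub_self]
  have := mul_eq_zero_of_star_mul_mul_eq_zero (sub_nonneg.mpr h) h0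
  rwa [sub_mul, mul_assoc _ E, hE.eq, sub_eq_zero] at this

lemma mul_eq_star_mul_mul_of_le_star_mul_mul {E : A} (hE : IsIdempotentElem E)
    (h : J ≤ star E * J * E) : J * E = star E * J * E := by
  simpa using mul_eq_star_mul_mul_of_star_mul_mul_le (J := -J) hE (by simpa using neg_le_neg h)

lemma eq_zero_or_one_le_abs_of_mem_spectrum (hJ : IsSelfAdjoint J) (hJ2 : J * J = 1)
    (hS : IsSelfAdjoint S) (hSJS : S * J * S = S) {t : ℝ} (ht : t ∈ spectrum ℝ S) :
    t = 0 ∨ 1 ≤ |t| := by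
  have hsq : S ^ 4 - S ^ 2 = star (J * S - S * S) * (J * S - S * S) := by
    rw [star_sub, star_mul, star_mul, hJ.star_eq, hS.star_eq]
    have : (S * J - S * S) * (J * S - S * S)
        = S * (J * J) * S - (S * J * S) * S - S * (S * J * S) + S ^ 4 := by noncomm_ring
    rw [this, hJ2, hSJS, mul_one]
    noncomm_ring
  have h0 : 0 ≤ cfc (fun t : ℝ => t ^ 4 - t ^ 2) S := by
    rw [cfc_sub (fun t : ℝ => t ^ 4) (fun t : ℝ => t ^ 2) S, cfc_pow_id S 4, cfc_pow_id S 2, hsq]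
    exact star_mul_self_nonneg _
  have ht' : 0 ≤ t ^ 2 * (t ^ 2 - 1) := by
    have := (cfc_nonneg_iff _ S).mp h0 t ht
    linarith
  refine (eq_or_ne t 0).imp id fun h => (one_le_sq_iff_one_le_abs t).mp ?_
  nlinarith [sq_pos_of_ne_zero h]

def IsJFactorization (J P E₁ E₂ : A) : Prop :=
  (IsIdempotentElem E₁ ∧ star E₁ * J * E₁ ≤ J) ∧
    (IsIdempotentElem E₂ ∧ J ≤ star E₂ * J * E₂) ∧
    P = E₁ * E₂ ∧ P = E₂ * E₁ ∧ P = E₁ + E₂ - 1 ∧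
    E₁ * star E₂ = star E₂ * E₁ ∧ E₁ * star E₂ = E₁ + star E₂ - 1

lemma isJFactorization_one_sub_mul_posPart {P : A} (hJ : IsSelfAdjoint J) (hJ2 : J * J = 1)
    (hS : IsSelfAdjoint S) (hSJS : S * J * S = S) (hJS : J * S = 1 - P) :
    IsJFactorization J P (1 - J * S⁺) (1 + J * S⁻) := by
  have hgap : ∀ t ∈ spectrum ℝ S, t = 0 ∨ 1 ≤ |t| := fun t ht =>
    eq_zero_or_one_le_abs_of_mem_spectrum hJ hJ2 hS hSJS ht
  have hpp := posPart_mul_mul_posPart hS hSJS hgap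
  have hpn := posPart_mul_mul_negPart hS hSJS hgap
  have hnp := negPart_mul_mul_posPart hS hSJS hgap
  have hnn : -S⁻ * J * -S⁻ = -S⁻ := by
    simpa only [neg_mul, mul_neg, neg_neg, neg_inj] using negPart_mul_mul_negPart hS hSJS hgap
  have hexp : 1 + J * S⁻ = 1 - J * -S⁻ := by rw [mul_neg, sub_neg_eq_add]
  have hpos_sa : IsSelfAdjoint S⁺ := .of_nonneg (CFC.posPart_nonneg S)
  have hneg_sa : IsSelfAdjoint S⁻ := .of_nonneg (CFC.negPart_nonneg S)
  have hP : P = 1 - J * (S⁺ - S⁻) := by rw [CFC.posPart_sub_negPart S, hJS, sub_sub_cancel]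
  have hstar : star (1 + J * S⁻) = 1 + S⁻ * J := by
    rw [star_add, star_one, star_mul, hJ.star_eq, hneg_sa.star_eq]
  refine ⟨⟨isIdempotentElem_one_sub_mul hpp, sub_nonneg.mp ?_⟩,
    ⟨hexp ▸ isIdempotentElem_one_sub_mul hnn, sub_nonpos.mp ?_⟩, ?_, ?_, ?_, ?_, ?_⟩
  · rw [sub_star_mul_mul_one_sub_mul hJ hJ2 hpos_sa hpp]
    exact CFC.posPart_nonneg S
  · rw [hexp, sub_star_mul_mul_one_sub_mul hJ hJ2 hneg_sa.neg hnn]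
    exact neg_nonpos.mpr (CFC.negPart_nonneg S)
  · calc P = 1 - J * (S⁺ - S⁻) - J * (S⁺ * J * S⁻) := by rw [hpn, mul_zero, sub_zero, hP]
      _ = _ := by noncomm_ring
  · calc P = 1 - J * (S⁺ - S⁻) - J * (S⁻ * J * S⁺) := by rw [hnp, mul_zero, sub_zero, hP]
      _ = _ := by noncomm_ring
  · rw [hP]
    noncomm_ring
  · calc (1 - J * S⁺) * star (1 + J * S⁻) = 1 + S⁻ * J - J * S⁺ - J * (S⁺ * S⁻) * J := by
          rw [hstar]; noncomm_ring
      _ = 1 + S⁻ * J - J * S⁺ - S⁻ * (J * J) * S⁺ := by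
          rw [CFC.posPart_mul_negPart, hJ2, mul_one, CFC.negPart_mul_posPart, mul_zero, zero_mul]
      _ = _ := by rw [hstar]; noncomm_ring
  · rw [hstar, mul_add, mul_one, ← mul_assoc, sub_mul, one_mul, mul_assoc J,
      CFC.posPart_mul_negPart]
    noncomm_ring

lemma IsJFactorization.eq_one_sub_mul_posPart {P E₁ E₂ : A} (hJ : IsSelfAdjoint J) (hJ2 : J * J = 1)
    (h : IsJFactorization J P E₁ E₂) :
    E₁ = 1 - J * (J * (1 - P))⁺ ∧ E₂ = 1 + J * (J * (1 - P))⁻ := by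
  obtain ⟨⟨hE₁, hE₁J⟩, ⟨hE₂, hE₂J⟩, -, -, hP, -, hE₁₂⟩ := h
  have u₁ := mul_eq_star_mul_mul_of_star_mul_mul_le hE₁ hE₁J
  have u₂ := mul_eq_star_mul_mul_of_le_star_mul_mul hE₂ hE₂J
  have hb : 0 ≤ J * (1 - E₁) := by
    rw [mul_sub, mul_one, u₁]
    exact sub_nonneg.mpr hE₁J
  have hc : 0 ≤ J * (E₂ - 1) := by
    rw [mul_sub, mul_one, u₂]
    exact sub_nonneg.mpr hE₂J
  have hbc : J * (1 - E₁) * (J * (E₂ - 1)) = 0 :=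
    calc J * (1 - E₁) * (J * (E₂ - 1)) = J * (1 - E₁) * ((star E₂ - 1) * J) := by
          rw [sub_mul, star_mul_eq_mul_of_mul_eq_star_mul_mul hJ u₂, one_mul, ← mul_sub_one]
      _ = J * (E₁ + star E₂ - 1 - E₁ * star E₂) * J := by noncomm_ring
      _ = 0 := by rw [hE₁₂, sub_self, mul_zero, zero_mul]
  obtain ⟨hpos, hneg⟩ := CFC.posPart_negPart_unique (a := J * (1 - P))
    (by rw [hP]; noncomm_ring) hbc hb hc
  rw [hpos, hneg, ← mul_assoc, ← mul_assoc, hJ2, one_mul, one_mul]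
  constructor <;> abel

theorem existsUnique_isJFactorization {J P : A} (hJ : IsSelfAdjoint J) (hJ2 : J * J = 1)
    (hP : IsIdempotentElem P) (hJP : J * P * J = star P) :
    ∃! E : A × A, IsJFactorization J P E.1 E.2 := by
  have hJS : J * (J * (1 - P)) = 1 - P := by rw [← mul_assoc, hJ2, one_mul]
  have hS : IsSelfAdjoint (J * (1 - P)) := by
    rw [IsSelfAdjoint, star_mul, star_sub, star_one, hJ.star_eq, ← hJP, sub_mul, one_mul,
      mul_assoc, mul_assoc, hJ2, mul_one, mul_sub, mul_one]
  have hSJS : J * (1 - P) * J * (J * (1 - P)) = J * (1 - P) := by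
    rw [mul_assoc, hJS, mul_assoc, hP.one_sub.eq]
  refine ⟨(_, _), isJFactorization_one_sub_mul_posPart hJ hJ2 hS hSJS hJS, fun E hE => ?_⟩
  obtain ⟨h₁, h₂⟩ := hE.eq_one_sub_mul_posPart hJ hJ2
  exact Prod.ext h₁ h₂

end CStarAlgebra

/-- Every `J`-projection `P` factors uniquely as `P = E1 E2 = E2 E1 = E1 + E2 − I`
with `E1 E2* = E2* E1 = E1 + E2* − I`, where `E1` is a `J`-contractive projection
and `E2` is a `J`-expansive projection. -/
theorem jProjection_unique_factorization (J P : H →L[ℂ] H) (hJ : IsSymmetry J)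
    (hP : P * P = P) (hJP : J * P * J = adjoint P) :
    ∃! E : (H →L[ℂ] H) × (H →L[ℂ] H),
      (E.1 * E.1 = E.1 ∧ (J - adjoint E.1 * J * E.1).IsPositive) ∧
      (E.2 * E.2 = E.2 ∧ (adjoint E.2 * J * E.2 - J).IsPositive) ∧
      P = E.1 * E.2 ∧ P = E.2 * E.1 ∧ P = E.1 + E.2 - 1 ∧
      E.1 * adjoint E.2 = adjoint E.2 * E.1 ∧
      E.1 * adjoint E.2 = E.1 + adjoint E.2 - 1 := by
  simp only [← star_eq_adjoint, ← nonneg_iff_isPositive, sub_nonneg] at hJP ⊢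
  exact existsUnique_isJFactorization hJ.1 hJ.2 hP hJP
end
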